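/- Let Γ < G be a countable subgroup of a group G which is co-amenable in G. Then for every countable subgroup Λ₁ < G containing Γ there exists a countable subgroup Λ < G containing Λ₁ such that Γ is co-amenable in Λ. Moreover, if 𝓗 is a family of countable subgroups of G that is cofinal (every countable subgroup of G is contained in some member of 𝓗) and closed under countable increasing unions, then Λ can be chosen in 𝓗. -/

import Mathlib

open Matrix Filter Topology MeasureTheory

noncomputable section

/-- The group of homeomorphisms of a topological space, under composition. -/
instance Homeomorph.instGroup_PP {X : Type*} [TopologicalSpace X] : Group (X ≃ₜ X) where
  mul a b := b.trans a
  one := Homeomorph.refl X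
  inv := Homeomorph.symm
  mul_assoc a b c := Homeomorph.ext fun _ => rfl
  one_mul a := Homeomorph.ext fun _ => rfl
  mul_one a := Homeomorph.ext fun _ => rfl
  inv_mul_cancel a := Homeomorph.ext fun x => a.symm_apply_apply x

@[simp] lemma Homeomorph.mul_apply_PP {X : Type*} [TopologicalSpace X]
    (a b : X ≃ₜ X) (x : X) : (a * b) x = a (b x) := rfl

@[simp] lemma Homeomorph.inv_coe {X : Type*} [TopologicalSpace X]
    (a : X ≃ₜ X) : (a⁻¹ : X ≃ₜ X) = a.symm := rfl

abbrev SL2 (R : Type*) [CommRing R] := Matrix.SpecialLinearGroup (Fin 2) R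

namespace PP

/-- Denominator of the Möbius transformation attached to `g`. -/
def mdenom (g : SL2 ℝ) (x : ℝ) : ℝ := g.1 1 0 * x + g.1 1 1

/-- The Möbius transformation attached to `g`. -/
def moebius (g : SL2 ℝ) (x : ℝ) : ℝ := (g.1 0 0 * x + g.1 0 1) / (g.1 1 0 * x + g.1 1 1)

/-- `g` is a local (projective) piece of the homeomorphism `h` at the point `x`. -/
def IsLocalPiece (h : ℝ ≃ₜ ℝ) (g : SL2 ℝ) (x : ℝ) : Prop :=
  mdenom g x ≠ 0 ∧ ∀ᶠ y in 𝓝 x, h y = moebius g y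

/-- `h` is piecewise given by Möbius transformations of matrices in `M`:
outside of a finite set of breakpoints, `h` is locally a Möbius map from `M`. -/
def IsPiecewiseIn (M : Set (SL2 ℝ)) (h : ℝ ≃ₜ ℝ) : Prop :=
  ∃ B : Finset ℝ, ∀ x ∉ B, ∃ g ∈ M, IsLocalPiece h g x

/-- A breakpoint of `h` : a point where `h` is not locally projective. -/
def IsBreakpoint (h : ℝ ≃ₜ ℝ) (x : ℝ) : Prop := ¬ ∃ g : SL2 ℝ, IsLocalPiece h g x

/-- Matrices with entries in the subring `A`. -/
def entriesIn (A : Subring ℝ) : Set (SL2 ℝ) := {g | ∀ i j, g.1 i j ∈ A}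

lemma one_entriesIn (A : Subring ℝ) : (1 : SL2 ℝ) ∈ entriesIn A := by
  intro i j
  by_cases h : i = j <;>
    simp [entriesIn, Matrix.SpecialLinearGroup.coe_one, Matrix.one_apply, h, A.one_mem, A.zero_mem]

lemma mul_entriesIn {A : Subring ℝ} {g₁ g₂ : SL2 ℝ} (h₁ : g₁ ∈ entriesIn A)
    (h₂ : g₂ ∈ entriesIn A) : g₁ * g₂ ∈ entriesIn A := by
  intro i j
  rw [Matrix.SpecialLinearGroup.coe_mul, Matrix.mul_apply]
  exact Subring.sum_mem A fun k _ => A.mul_mem (h₁ i k) (h₂ k j)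

lemma inv_entriesIn {A : Subring ℝ} {g : SL2 ℝ} (h : g ∈ entriesIn A) :
    g⁻¹ ∈ entriesIn A := by
  intro i j
  have : (g⁻¹ : SL2 ℝ).1 = (g.1).adjugate := Matrix.SpecialLinearGroup.coe_inv g
  rw [this, Matrix.adjugate_fin_two]
  fin_cases i <;> fin_cases j <;>
    simp [Matrix.cons_val_zero, Matrix.cons_val_one] <;>
    first
      | exact h 1 1
      | exact h 0 1
      | exact h 1 0
      | exact A.neg_mem (h 0 1)
      | exact A.neg_mem (h 1 0)
      | exact h 0 0

lemma det_eq (g : SL2 ℝ) : g.1 0 0 * g.1 1 1 - g.1 0 1 * g.1 1 0 = 1 := by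
  have := g.2
  rwa [Matrix.det_fin_two] at this

/-- Composition of Möbius transformations (denominator part). -/
lemma mdenom_mul (g₁ g₂ : SL2 ℝ) (x : ℝ) (h₂ : mdenom g₂ x ≠ 0) :
    mdenom (g₁ * g₂) x = mdenom g₁ (moebius g₂ x) * mdenom g₂ x := by
  unfold mdenom moebius at *
  rw [Matrix.SpecialLinearGroup.coe_mul, Matrix.mul_apply, Matrix.mul_apply, Fin.sum_univ_two,
    Fin.sum_univ_two]
  field_simp
  ring

lemma mdenom_mul_ne (g₁ g₂ : SL2 ℝ) (x : ℝ) (h₂ : mdenom g₂ x ≠ 0)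
    (h₁ : mdenom g₁ (moebius g₂ x) ≠ 0) : mdenom (g₁ * g₂) x ≠ 0 := by
  rw [mdenom_mul g₁ g₂ x h₂]; exact mul_ne_zero h₁ h₂

lemma moebius_mul (g₁ g₂ : SL2 ℝ) (x : ℝ) (h₂ : mdenom g₂ x ≠ 0)
    (h₁ : mdenom g₁ (moebius g₂ x) ≠ 0) :
    moebius (g₁ * g₂) x = moebius g₁ (moebius g₂ x) := by
  have hden := mdenom_mul_ne g₁ g₂ x h₂ h₁
  unfold mdenom moebius at *
  simp only [Matrix.SpecialLinearGroup.coe_mul, Matrix.mul_apply, Fin.sum_univ_two] at *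
  rw [div_eq_div_iff hden h₁]
  field_simp
  ring

lemma inv_entry_00 (g : SL2 ℝ) : (g⁻¹ : SL2 ℝ).1 0 0 = g.1 1 1 := by
  simp [Matrix.SpecialLinearGroup.coe_inv, Matrix.adjugate_fin_two]
lemma inv_entry_01 (g : SL2 ℝ) : (g⁻¹ : SL2 ℝ).1 0 1 = -g.1 0 1 := by
  simp [Matrix.SpecialLinearGroup.coe_inv, Matrix.adjugate_fin_two]
lemma inv_entry_10 (g : SL2 ℝ) : (g⁻¹ : SL2 ℝ).1 1 0 = -g.1 1 0 := by
  simp [Matrix.SpecialLinearGroup.coe_inv, Matrix.adjugate_fin_two]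
lemma inv_entry_11 (g : SL2 ℝ) : (g⁻¹ : SL2 ℝ).1 1 1 = g.1 0 0 := by
  simp [Matrix.SpecialLinearGroup.coe_inv, Matrix.adjugate_fin_two]

lemma moebius_one (x : ℝ) : moebius 1 x = x := by
  unfold moebius
  simp [Matrix.SpecialLinearGroup.coe_one, Matrix.one_apply]

lemma mdenom_one (x : ℝ) : mdenom 1 x = 1 := by
  unfold mdenom
  simp [Matrix.SpecialLinearGroup.coe_one, Matrix.one_apply]

lemma mdenom_inv (g : SL2 ℝ) (x : ℝ) (h : mdenom g x ≠ 0) :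
    mdenom g⁻¹ (moebius g x) = 1 / mdenom g x := by
  have hdet := det_eq g
  unfold mdenom moebius at *
  rw [inv_entry_10, inv_entry_11]
  field_simp
  linear_combination hdet

lemma moebius_inv (g : SL2 ℝ) (x : ℝ) (h : mdenom g x ≠ 0) :
    mdenom g⁻¹ (moebius g x) ≠ 0 ∧ moebius g⁻¹ (moebius g x) = x := by
  have h1 : mdenom g⁻¹ (moebius g x) = 1 / mdenom g x := mdenom_inv g x h
  have hne : mdenom g⁻¹ (moebius g x) ≠ 0 := by rw [h1]; exact one_div_ne_zero h
  refine ⟨hne, ?_⟩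
  rw [← moebius_mul g⁻¹ g x h hne, inv_mul_cancel, moebius_one]

lemma mdenom_continuous (g : SL2 ℝ) : Continuous (mdenom g) := by
  unfold mdenom; fun_prop

lemma eventually_mdenom_ne (g : SL2 ℝ) {x : ℝ} (h : mdenom g x ≠ 0) :
    ∀ᶠ y in 𝓝 x, mdenom g y ≠ 0 :=
  (mdenom_continuous g).continuousAt.eventually_ne h

lemma IsLocalPiece.mul {a b : ℝ ≃ₜ ℝ} {g₁ g₂ : SL2 ℝ} {x : ℝ}
    (h₁ : IsLocalPiece a g₁ (b x)) (h₂ : IsLocalPiece b g₂ x) :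
    IsLocalPiece (a * b) (g₁ * g₂) x := by
  obtain ⟨d₂, e₂⟩ := h₂
  obtain ⟨d₁, e₁⟩ := h₁
  have hbx : b x = moebius g₂ x := e₂.self_of_nhds
  have d₁' : mdenom g₁ (moebius g₂ x) ≠ 0 := hbx ▸ d₁
  refine ⟨mdenom_mul_ne g₁ g₂ x d₂ d₁', ?_⟩
  have hmap : ∀ᶠ y in 𝓝 x, a (b y) = moebius g₁ (b y) := by
    have hb : Filter.map b (𝓝 x) = 𝓝 (b x) := b.map_nhds_eq x
    rw [← hb] at e₁
    exact e₁
  have hd1ev : ∀ᶠ y in 𝓝 x, mdenom g₁ (b y) ≠ 0 := by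
    have hb : Filter.map b (𝓝 x) = 𝓝 (b x) := b.map_nhds_eq x
    have := eventually_mdenom_ne g₁ d₁
    rw [← hb] at this
    exact this
  filter_upwards [e₂, hmap, hd1ev, eventually_mdenom_ne g₂ d₂] with y hy₂ hy₁ hyd₁ hyd₂
  have hyd₁' : mdenom g₁ (moebius g₂ y) ≠ 0 := by rw [← hy₂]; exact hyd₁
  calc (a * b) y = a (b y) := rfl
    _ = moebius g₁ (b y) := hy₁
    _ = moebius g₁ (moebius g₂ y) := by rw [hy₂]
    _ = moebius (g₁ * g₂) y := (moebius_mul g₁ g₂ y hyd₂ hyd₁').symm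

lemma IsLocalPiece.inv {h : ℝ ≃ₜ ℝ} {g : SL2 ℝ} {x : ℝ} (hp : IsLocalPiece h g x) :
    IsLocalPiece h⁻¹ g⁻¹ (h x) := by
  obtain ⟨d, e⟩ := hp
  have hx : h x = moebius g x := e.self_of_nhds
  refine ⟨by rw [hx]; exact (moebius_inv g x d).1, ?_⟩
  have hb : Filter.map h (𝓝 x) = 𝓝 (h x) := h.map_nhds_eq x
  rw [← hb, Filter.eventually_map]
  filter_upwards [e, eventually_mdenom_ne g d] with y hy hyd
  calc (h⁻¹ : ℝ ≃ₜ ℝ) (h y) = y := h.symm_apply_apply y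
    _ = moebius g⁻¹ (h y) := by rw [hy]; exact ((moebius_inv g y hyd).2).symm

lemma isLocalPiece_one (x : ℝ) : IsLocalPiece 1 1 x := by
  refine ⟨by rw [mdenom_one]; exact one_ne_zero, ?_⟩
  filter_upwards with y
  rw [moebius_one]
  rfl

/-- The group of piecewise-`SL₂(A)` homeomorphisms of the real line. -/
def PW (A : Subring ℝ) : Subgroup (ℝ ≃ₜ ℝ) where
  carrier := {h | IsPiecewiseIn (entriesIn A) h}
  one_mem' := ⟨∅, fun x _ => ⟨1, one_entriesIn A, isLocalPiece_one x⟩⟩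
  mul_mem' := by
    rintro a b ⟨Ba, hBa⟩ ⟨Bb, hBb⟩
    refine ⟨Bb ∪ Ba.image b.symm, fun x hx => ?_⟩
    rw [Finset.mem_union, not_or] at hx
    obtain ⟨hxb, hxa⟩ := hx
    obtain ⟨g₂, hg₂A, hg₂⟩ := hBb x hxb
    have hbx : b x ∉ Ba := by
      intro hmem
      exact hxa (Finset.mem_image.2 ⟨b x, hmem, b.symm_apply_apply x⟩)
    obtain ⟨g₁, hg₁A, hg₁⟩ := hBa (b x) hbx
    exact ⟨g₁ * g₂, mul_entriesIn hg₁A hg₂A, hg₁.mul hg₂⟩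
  inv_mem' := by
    rintro h ⟨B, hB⟩
    refine ⟨B.image h, fun y hy => ?_⟩
    have hxB : h.symm y ∉ B := by
      intro hmem
      exact hy (Finset.mem_image.2 ⟨h.symm y, hmem, h.apply_symm_apply y⟩)
    obtain ⟨g, hgA, hg⟩ := hB (h.symm y) hxB
    have := hg.inv
    rw [h.apply_symm_apply y] at this
    exact ⟨g⁻¹, inv_entriesIn hgA, this⟩

/-- Real fixed points of hyperbolic elements of `SL₂(A)`. -/
def FixHyp (A : Subring ℝ) : Set ℝ :=
  {x | ∃ g : SL2 ℝ, g ∈ entriesIn A ∧ |Matrix.trace g.1| > 2 ∧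
        mdenom g x ≠ 0 ∧ moebius g x = x}

lemma trace_conj (g q : SL2 ℝ) :
    Matrix.trace ((g⁻¹ * q * g : SL2 ℝ) : Matrix (Fin 2) (Fin 2) ℝ) = Matrix.trace q.1 := by
  rw [Matrix.SpecialLinearGroup.coe_mul, Matrix.SpecialLinearGroup.coe_mul,
    Matrix.trace_mul_comm, ← Matrix.mul_assoc, ← Matrix.SpecialLinearGroup.coe_mul,
    mul_inv_cancel, Matrix.SpecialLinearGroup.coe_one, Matrix.one_mul]

lemma FixHyp.conj {A : Subring ℝ} {g : SL2 ℝ} {x : ℝ} (hgA : g ∈ entriesIn A)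
    (hd : mdenom g x ≠ 0) (hfix : moebius g x ∈ FixHyp A) : x ∈ FixHyp A := by
  obtain ⟨q, hqA, hqtr, hqd, hqfix⟩ := hfix
  refine ⟨g⁻¹ * q * g, mul_entriesIn (mul_entriesIn (inv_entriesIn hgA) hqA) hgA,
    by rw [trace_conj]; exact hqtr, ?_, ?_⟩
  all_goals
    have hden1 : mdenom (q * g) x ≠ 0 := mdenom_mul_ne q g x hd hqd
    have hmo1 : moebius (q * g) x = moebius g x := by
      rw [moebius_mul q g x hd hqd, hqfix]
    have hden2 : mdenom g⁻¹ (moebius (q * g) x) ≠ 0 := by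
      rw [hmo1]; exact (moebius_inv g x hd).1
  · rw [mul_assoc]
    exact mdenom_mul_ne g⁻¹ (q * g) x hden1 hden2
  · rw [mul_assoc, moebius_mul g⁻¹ (q * g) x hden1 hden2, hmo1]
    exact (moebius_inv g x hd).2

/-- `h` is locally an `SL₂(A)`-Möbius map away from the set `Φ`. -/
def LocallyIn (A : Subring ℝ) (Φ : Set ℝ) (h : ℝ ≃ₜ ℝ) : Prop :=
  ∀ x : ℝ, x ∉ Φ → ∃ g ∈ entriesIn A, IsLocalPiece h g x

/-- The complement of `Φ` is invariant under Möbius maps with entries in `A`. -/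
def MoebiusInv (A : Subring ℝ) (Φ : Set ℝ) : Prop :=
  ∀ g ∈ entriesIn A, ∀ x : ℝ, mdenom g x ≠ 0 → x ∉ Φ → moebius g x ∉ Φ

lemma LocallyIn.mul {A : Subring ℝ} {Φ : Set ℝ} (hΦ : MoebiusInv A Φ) {a b : ℝ ≃ₜ ℝ}
    (ha : LocallyIn A Φ a) (hb : LocallyIn A Φ b) : LocallyIn A Φ (a * b) := by
  intro x hx
  obtain ⟨g₂, hg₂A, hg₂⟩ := hb x hx
  have hbx : b x ∉ Φ := by
    have : b x = moebius g₂ x := hg₂.2.self_of_nhds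
    rw [this]
    exact hΦ g₂ hg₂A x hg₂.1 hx
  obtain ⟨g₁, hg₁A, hg₁⟩ := ha (b x) hbx
  exact ⟨g₁ * g₂, mul_entriesIn hg₁A hg₂A, hg₁.mul hg₂⟩

/-- The group of piecewise-`SL₂(A)` homeomorphisms of the line all of whose
breakpoints lie in the set `Φ`. -/
def BreakIn (A : Subring ℝ) (Φ : Set ℝ) (hΦ : MoebiusInv A Φ) : Subgroup (ℝ ≃ₜ ℝ) where
  carrier := {h | IsPiecewiseIn (entriesIn A) h ∧ LocallyIn A Φ h ∧ LocallyIn A Φ h⁻¹}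
  one_mem' := by
    refine ⟨(PW A).one_mem', ?_, ?_⟩ <;>
      · intro x _
        exact ⟨1, one_entriesIn A, isLocalPiece_one x⟩
  mul_mem' := by
    rintro a b ⟨hapw, ha, ha'⟩ ⟨hbpw, hb, hb'⟩
    refine ⟨(PW A).mul_mem' hapw hbpw, LocallyIn.mul hΦ ha hb, ?_⟩
    rw [_root_.mul_inv_rev]
    exact LocallyIn.mul hΦ hb' ha'
  inv_mem' := by
    rintro h ⟨hpw, h₁, h₂⟩
    refine ⟨(PW A).inv_mem' hpw, h₂, ?_⟩
    rw [inv_inv]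
    exact h₁

lemma fixHyp_moebiusInv (A : Subring ℝ) : MoebiusInv A (FixHyp A) :=
  fun g hg x hd hx hmem => hx (FixHyp.conj hg hd hmem)

/-- The group `H(A)`: piecewise-`SL₂(A)` homeomorphisms of the line whose
breakpoints are fixed points of hyperbolic elements of `SL₂(A)`. -/
def HGroup (A : Subring ℝ) : Subgroup (ℝ ≃ₜ ℝ) := BreakIn A (FixHyp A) (fixHyp_moebiusInv A)

/-- The ring `ℤ[1/S]` of `S`-integers, as a subring of `ℚ`. -/
def SIntQ (S : Set ℕ) : Subring ℚ := Subring.closure {x : ℚ | ∃ p ∈ S, x = (p : ℚ)⁻¹}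

/-- The ring `ℤ[1/S]` of `S`-integers, as a subring of `ℝ`. -/
def SIntR (S : Set ℕ) : Subring ℝ := Subring.closure {x : ℝ | ∃ p ∈ S, x = (p : ℝ)⁻¹}

/-- The group `Γ_S` of piecewise-`SL₂(ℤ[1/S])` homeomorphisms of the line. -/
def Gamma (S : Set ℕ) : Subgroup (ℝ ≃ₜ ℝ) := PW (SIntR S)

/-- `ℚ` as a subring of `ℝ`. -/
def ratSubring : Subring ℝ := (Rat.castHom ℝ).range

/-- `ℤ` as a subring of `ℝ`. -/
def intSubring : Subring ℝ := (Int.castRingHom ℝ).range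

/-- The group `H(ℚ)` of piecewise-`SL₂(ℚ)` homeomorphisms of the line. -/
def HQ : Subgroup (ℝ ≃ₜ ℝ) := PW ratSubring

lemma ratSubring_div_mem {x y : ℝ} (hx : x ∈ ratSubring) (hy : y ∈ ratSubring) :
    x / y ∈ ratSubring := by
  obtain ⟨q, rfl⟩ := RingHom.mem_range.1 hx
  obtain ⟨r, rfl⟩ := RingHom.mem_range.1 hy
  refine RingHom.mem_range.2 ⟨q / r, ?_⟩
  simp [Rat.cast_div]

lemma moebius_mem_rat {g : SL2 ℝ} (hg : g ∈ entriesIn ratSubring) {y : ℝ}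
    (hy : y ∈ ratSubring) : moebius g y ∈ ratSubring := by
  unfold moebius
  exact ratSubring_div_mem
    (ratSubring.add_mem (ratSubring.mul_mem (hg 0 0) hy) (hg 0 1))
    (ratSubring.add_mem (ratSubring.mul_mem (hg 1 0) hy) (hg 1 1))

lemma rat_moebiusInv {A : Subring ℝ} (hA : A ≤ ratSubring) :
    MoebiusInv A (ratSubring : Set ℝ) := by
  intro g hg x hd hx hmem
  apply hx
  have : moebius g⁻¹ (moebius g x) = x := (moebius_inv g x hd).2
  rw [← this]
  exact moebius_mem_rat (fun i j => hA (inv_entriesIn hg i j)) hmem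

lemma intSubring_le_rat : intSubring ≤ ratSubring := by
  rintro x ⟨n, rfl⟩
  refine RingHom.mem_range.2 ⟨(n : ℚ), ?_⟩
  simp

/-- Thompson's group `F` realized as `H_ℚ(ℤ)`: piecewise-`SL₂(ℤ)` homeomorphisms
of the line with rational breakpoints. -/
def Thompson : Subgroup (ℝ ≃ₜ ℝ) :=
  BreakIn intSubring (ratSubring : Set ℝ) (rat_moebiusInv intSubring_le_rat)

/-- The group `H_ℚ(ℚ)` of piecewise-`SL₂(ℚ)` homeomorphisms of the line with
rational breakpoints. -/
def HQrat : Subgroup (ℝ ≃ₜ ℝ) :=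
  BreakIn ratSubring (ratSubring : Set ℝ) (rat_moebiusInv le_rfl)

/-- A bounded real-valued function. -/
def Bdd {X : Type*} (f : X → ℝ) : Prop := ∃ C, ∀ x, |f x| ≤ C

/-- A mean: a normalized positive linear functional on bounded functions. -/
structure MeanOn (X : Type*) where
  toFun : (X → ℝ) → ℝ
  add' : ∀ f g : X → ℝ, Bdd f → Bdd g → toFun (f + g) = toFun f + toFun g
  smul' : ∀ (c : ℝ) (f : X → ℝ), Bdd f → toFun (c • f) = c * toFun f
  mono' : ∀ f g : X → ℝ, Bdd f → Bdd g → (∀ x, f x ≤ g x) → toFun f ≤ toFun g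
  one' : toFun (fun _ => 1) = 1

/-- A subgroup `H ≤ G` is co-amenable in `G` if there is a `G`-invariant mean on `G/H`. -/
def CoAmenableIn {G : Type*} [Group G] (H : Subgroup G) : Prop :=
  ∃ m : MeanOn (G ⧸ H), ∀ (g : G) (f : (G ⧸ H) → ℝ), Bdd f →
    m.toFun (fun x => f (g • x)) = m.toFun f

end PP

/-!
Co-amenability of `Γ` in `G` is equivalent to Reiter's condition for `G` acting on `G ⧸ Γ`:
finitely supported probability vectors almost invariant under any finite `F ⊆ G` (Day's
Hahn–Banach argument in one direction, an ultrafilter limit in the other). Fix one such vector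
for each finite `F` and each precision `1 / (n + 1)`; each involves finitely many cosets. A
subgroup `Λ ∈ 𝓗` containing `Λ₁` and, with every finite `F ⊆ Λ`, representatives of the cosets
used by the vectors of `F`, is reached along an increasing chain in `𝓗`. Those vectors are then
supported on the cosets meeting `Λ`, that is on `Λ ⧸ (Γ ⊓ Λ)`, which gives Reiter's condition
for `Λ`.
-/

open Finsupp Filter Topology

namespace PP

variable {X Y H K : Type*}

lemma bdd_const (c : ℝ) : Bdd (fun _ : X => c) := ⟨|c|, fun _ => le_rfl⟩

lemma Bdd.comp {f : X → ℝ} (hf : Bdd f) (σ : Y → X) : Bdd (fun y => f (σ y)) :=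
  let ⟨C, hC⟩ := hf
  ⟨C, fun y => hC (σ y)⟩

lemma Bdd.sub {f g : X → ℝ} (hf : Bdd f) (hg : Bdd g) : Bdd (fun x => f x - g x) := by
  obtain ⟨C, hC⟩ := hf
  obtain ⟨D, hD⟩ := hg
  exact ⟨C + D, fun x => (abs_sub (f x) (g x)).trans (add_le_add (hC x) (hD x))⟩

lemma bdd_sum {ι : Type*} {s : Finset ι} {F : ι → X → ℝ} (h : ∀ i ∈ s, Bdd (F i)) :
    Bdd (fun x => ∑ i ∈ s, F i x) := by
  choose! C hC using h
  exact ⟨∑ i ∈ s, C i, fun x =>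
    (Finset.abs_sum_le_sum_abs _ _).trans (Finset.sum_le_sum fun i hi => hC i hi x)⟩

namespace MeanOn

variable (m : MeanOn X)

lemma map_const (c : ℝ) : m.toFun (fun _ => c) = c := by
  have h := m.smul' c (fun _ => 1) (bdd_const 1)
  rwa [m.one', mul_one, show c • (fun _ : X => (1 : ℝ)) = fun _ => c from
    funext fun _ => mul_one c] at h

lemma map_sub {f g : X → ℝ} (hf : Bdd f) (hg : Bdd g) :
    m.toFun (fun x => f x - g x) = m.toFun f - m.toFun g := by
  have h := m.add' _ g (hf.sub hg) hg
  rw [show (fun x => f x - g x) + g = f from funext fun x => sub_add_cancel (f x) (g x)] at h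
  linarith

lemma map_sum {ι : Type*} (s : Finset ι) (F : ι → X → ℝ) (h : ∀ i ∈ s, Bdd (F i)) :
    m.toFun (fun x => ∑ i ∈ s, F i x) = ∑ i ∈ s, m.toFun (F i) := by
  classical
  induction s using Finset.induction_on with
  | empty => simpa using m.map_const 0
  | insert a s ha ih =>
    have hs : ∀ i ∈ s, Bdd (F i) := fun i hi => h i (Finset.mem_insert_of_mem hi)
    rw [show (fun x => ∑ i ∈ insert a s, F i x) = F a + fun x => ∑ i ∈ s, F i x from
        funext fun x => Finset.sum_insert ha,
      m.add' _ _ (h a (Finset.mem_insert_self a s)) (bdd_sum hs), ih hs, Finset.sum_insert ha]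

lemma map_le_const {f : X → ℝ} (hf : Bdd f) {c : ℝ} (h : ∀ x, f x ≤ c) : m.toFun f ≤ c :=
  (m.mono' f _ hf (bdd_const c) h).trans_eq (m.map_const c)

/-- `CoAmenableIn Γ` says exactly that some mean on `G ⧸ Γ` is `IsInvariant G`. -/
def IsInvariant (H : Type*) [SMul H X] (m : MeanOn X) : Prop :=
  ∀ (g : H) (f : X → ℝ), Bdd f → m.toFun (fun x => f (g • x)) = m.toFun f

lemma IsInvariant.map_sum_sub_eq_zero [SMul H X] {m : MeanOn X} (hm : m.IsInvariant H)
    {ι : Type*} [Fintype ι] (γ : ι → H) (φ : ι → X → ℝ) (hφ : ∀ i, Bdd (φ i)) :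
    m.toFun (fun x => ∑ i, (φ i (γ i • x) - φ i x)) = 0 := by
  rw [m.map_sum _ _ fun i _ => ((hφ i).comp _).sub (hφ i)]
  exact Finset.sum_eq_zero fun i _ => by
    rw [m.map_sub ((hφ i).comp _) (hφ i), hm (γ i) (φ i) (hφ i), sub_self]

end MeanOn

def l1 (v : X →₀ ℝ) : ℝ := v.sum fun _ a => |a|

lemma l1_eq_sum_of_support_subset {s : Finset X} {v : X →₀ ℝ} (h : v.support ⊆ s) :
    l1 v = ∑ x ∈ s, |v x| :=
  Finset.sum_subset h fun x _ hx => by simp [Finsupp.notMem_support_iff.1 hx]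

lemma l1_nonneg (v : X →₀ ℝ) : 0 ≤ l1 v :=
  Finset.sum_nonneg fun _ _ => abs_nonneg _

lemma l1_mapDomain {f : X → Y} (hf : Function.Injective f) (v : X →₀ ℝ) :
    l1 (mapDomain f v) = l1 v :=
  sum_mapDomain_index_inj hf

def IsProb (v : X →₀ ℝ) : Prop := (∀ x, 0 ≤ v x) ∧ v.sum (fun _ a => a) = 1

lemma isProb_single (x : X) : IsProb (Finsupp.single x 1) :=
  ⟨fun y => by by_cases h : x = y <;> simp [h], sum_single_index rfl⟩

lemma IsProb.l1_eq_one {v : X →₀ ℝ} (hv : IsProb v) : l1 v = 1 :=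
  (Finsupp.sum_congr fun x _ => abs_of_nonneg (hv.1 x)).trans hv.2

lemma IsProb.of_mapDomain {f : X → Y} (hf : Function.Injective f) {v : X →₀ ℝ}
    (hv : IsProb (mapDomain f v)) : IsProb v :=
  ⟨fun x => mapDomain_apply hf v x ▸ hv.1 (f x),
    (sum_mapDomain_index (fun _ => rfl) fun _ _ _ => rfl).symm.trans hv.2⟩

lemma convex_setOf_isProb : Convex ℝ {v : X →₀ ℝ | IsProb v} := by
  rintro v ⟨hv₀, hv₁⟩ w ⟨hw₀, hw₁⟩ a b ha hb hab
  refine ⟨fun x => add_nonneg (mul_nonneg ha (hv₀ x)) (mul_nonneg hb (hw₀ x)), ?_⟩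
  rw [sum_add_index' (fun _ => rfl) fun _ _ _ => rfl, sum_smul_index fun _ => rfl,
    sum_smul_index fun _ => rfl, ← mul_sum, ← mul_sum, hv₁, hw₁, mul_one, mul_one, hab]

def ReiterCondition (H X : Type*) [SMul H X] : Prop :=
  ∀ (F : Finset H) (ε : ℝ), 0 < ε →
    ∃ v : X →₀ ℝ, IsProb v ∧ ∀ g ∈ F, l1 (mapDomain (g • ·) v - v) < ε

section L1Norm

abbrev l1NormedAddCommGroup : NormedAddCommGroup (X →₀ ℝ) :=
  AddGroupNorm.toNormedAddCommGroup
    { toFun := l1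
      map_zero' := by simp [l1]
      add_le' := fun v w => by
        classical
        rw [l1_eq_sum_of_support_subset support_add,
          l1_eq_sum_of_support_subset Finset.subset_union_left,
          l1_eq_sum_of_support_subset Finset.subset_union_right, ← Finset.sum_add_distrib]
        exact Finset.sum_le_sum fun x _ => abs_add_le (v x) (w x)
      neg' := fun v => by simp [l1, sum, support_neg]
      eq_zero_of_map_eq_zero' := fun v hv => by
        ext x
        by_cases hx : x ∈ v.support
        · exact abs_eq_zero.1 ((Finset.sum_eq_zero_iff_of_nonneg
            fun y _ => abs_nonneg (v y)).1 hv x hx)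
        · exact notMem_support_iff.1 hx }

attribute [local instance] l1NormedAddCommGroup

lemma norm_eq_l1 (v : X →₀ ℝ) : ‖v‖ = l1 v := rfl

abbrev l1NormedSpace : NormedSpace ℝ (X →₀ ℝ) where
  toModule := inferInstance
  norm_smul_le c v := by
    rw [norm_eq_l1, norm_eq_l1, l1_eq_sum_of_support_subset support_smul, l1, sum,
      Finset.mul_sum]
    exact Finset.sum_le_sum fun x _ => by simp [abs_mul]

attribute [local instance] l1NormedSpace

/-- Day's argument: if `0` were not in the norm closure of the convex set
`{(g • v - v)_{g ∈ F} | v a probability vector}`, a separating functional would give bounded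
functions `φ g` whose coboundary `∑ g, (φ g ∘ (g • ·) - φ g)` is uniformly negative, yet an
invariant mean vanishes on coboundaries. -/
theorem MeanOn.IsInvariant.reiterCondition [SMul H X] {m : MeanOn X}
    (hm : m.IsInvariant H) : ReiterCondition H X := by
  classical
  intro F ε hε
  let T : (X →₀ ℝ) →ₗ[ℝ] (F → X →₀ ℝ) :=
    LinearMap.pi fun g => lmapDomain ℝ ℝ (g.1 • ·) - LinearMap.id
  suffices h0 : (0 : F → X →₀ ℝ) ∈ closure (T '' {v | IsProb v}) by
    obtain ⟨_, ⟨v, hv, rfl⟩, hdist⟩ := Metric.mem_closure_iff.1 h0 ε hε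
    rw [dist_comm, dist_zero_right] at hdist
    exact ⟨v, hv, fun g hg => (norm_le_pi_norm (T v) ⟨g, hg⟩).trans_lt hdist⟩
  by_contra h0
  obtain ⟨f, u, hfu, hu⟩ := geometric_hahn_banach_closed_point
    (convex_setOf_isProb.linear_image T).closure isClosed_closure h0
  rw [map_zero] at hu
  let φ : F → X → ℝ := fun g x => f (Pi.single g (Finsupp.single x 1))
  have hφ : ∀ g, Bdd (φ g) := fun g => ⟨‖f‖, fun x => by
    simpa [φ, Pi.norm_single, norm_eq_l1, l1] using f.le_opNorm (Pi.single g (Finsupp.single x 1))⟩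
  have hTsingle : ∀ x, f (T (Finsupp.single x 1)) = ∑ g, (φ g (g.1 • x) - φ g x) := fun x => by
    conv_lhs => rw [← Finset.univ_sum_single (T (Finsupp.single x 1))]
    simp [T, φ, Pi.single_sub]
  have hle : ∀ x, ∑ g, (φ g (g.1 • x) - φ g x) ≤ u := fun x =>
    (hTsingle x ▸ hfu _ (subset_closure ⟨_, isProb_single x, rfl⟩)).le
  have := m.map_le_const (bdd_sum fun g _ => ((hφ g).comp _).sub (hφ g)) hle
  rw [hm.map_sum_sub_eq_zero _ _ hφ] at this
  linarith

end L1Norm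

def pairing (v : X →₀ ℝ) (f : X → ℝ) : ℝ := v.sum fun x a => a * f x

lemma pairing_add (v : X →₀ ℝ) (f g : X → ℝ) :
    pairing v (f + g) = pairing v f + pairing v g := by
  simp only [pairing, Pi.add_apply, mul_add, sum_add]

lemma pairing_smul (v : X →₀ ℝ) (c : ℝ) (f : X → ℝ) :
    pairing v (c • f) = c * pairing v f := by
  simp only [pairing, Pi.smul_apply, smul_eq_mul, mul_sum, mul_left_comm]

lemma pairing_mono {v : X →₀ ℝ} (hv : ∀ x, 0 ≤ v x) {f g : X → ℝ} (h : ∀ x, f x ≤ g x) :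
    pairing v f ≤ pairing v g :=
  Finset.sum_le_sum fun x _ => mul_le_mul_of_nonneg_left (h x) (hv x)

lemma abs_pairing_le (v : X →₀ ℝ) {f : X → ℝ} {C : ℝ} (hf : ∀ x, |f x| ≤ C) :
    |pairing v f| ≤ C * l1 v := by
  rw [l1, sum, Finset.mul_sum]
  refine (Finset.abs_sum_le_sum_abs _ _).trans (Finset.sum_le_sum fun x _ => ?_)
  rw [abs_mul, mul_comm]
  exact mul_le_mul_of_nonneg_right (hf x) (abs_nonneg _)

lemma pairing_mapDomain_sub (σ : X → X) (v : X →₀ ℝ) (f : X → ℝ) :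
    pairing (mapDomain σ v - v) f = pairing v (fun x => f (σ x)) - pairing v f := by
  rw [pairing, sum_sub_index fun _ _ _ => sub_mul _ _ _,
    sum_mapDomain_index (fun _ => zero_mul _) fun _ _ _ => add_mul _ _ _]
  rfl

lemma IsProb.pairing_one {v : X →₀ ℝ} (hv : IsProb v) : pairing v (fun _ => 1) = 1 := by
  simpa [pairing] using hv.2

section Ultrafilter

variable {ι : Type*} (U : Ultrafilter ι) {v : ι → X →₀ ℝ}

lemma tendsto_limUnder_pairing (hv : ∀ i, IsProb (v i)) {f : X → ℝ} (hf : Bdd f) :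
    Tendsto (fun i => pairing (v i) f) U (𝓝 (limUnder U fun i => pairing (v i) f)) := by
  obtain ⟨C, hC⟩ := hf
  have hmem : ∀ i, pairing (v i) f ∈ Set.Icc (-C) C := fun i =>
    abs_le.1 ((abs_pairing_le (v i) hC).trans_eq (by rw [(hv i).l1_eq_one, mul_one]))
  obtain ⟨L, -, hL⟩ := isCompact_Icc.ultrafilter_le_nhds (U.map fun i => pairing (v i) f)
    (le_principal_iff.2 (Filter.mem_map.2 (univ_mem' hmem)))
  exact tendsto_nhds_limUnder ⟨L, hL⟩

def meanOfUltrafilter (hv : ∀ i, IsProb (v i)) : MeanOn X where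
  toFun f := limUnder U fun i => pairing (v i) f
  add' f g hf hg := (((tendsto_limUnder_pairing U hv hf).add
    (tendsto_limUnder_pairing U hv hg)).congr fun i => (pairing_add (v i) f g).symm).limUnder_eq
  smul' c f hf := (((tendsto_limUnder_pairing U hv hf).const_mul c).congr
    fun i => (pairing_smul (v i) c f).symm).limUnder_eq
  mono' _ _ hf hg h := le_of_tendsto_of_tendsto' (tendsto_limUnder_pairing U hv hf)
    (tendsto_limUnder_pairing U hv hg) fun i => pairing_mono (hv i).1 h
  one' := (tendsto_const_nhds.congr fun i => (hv i).pairing_one.symm).limUnder_eq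

lemma tendsto_meanOfUltrafilter (hv : ∀ i, IsProb (v i)) {f : X → ℝ} (hf : Bdd f) :
    Tendsto (fun i => pairing (v i) f) U (𝓝 ((meanOfUltrafilter U hv).toFun f)) :=
  tendsto_limUnder_pairing U hv hf

end Ultrafilter

lemma tendsto_l1_mapDomain_sub_atTop [SMul H X] {v : Finset H × ℕ → X →₀ ℝ}
    (hv : ∀ i, ∀ g ∈ i.1, l1 (mapDomain (g • ·) (v i) - v i) < 1 / (i.2 + 1)) (g : H) :
    Tendsto (fun i => l1 (mapDomain (g • ·) (v i) - v i)) atTop (𝓝 0) := by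
  have h : Tendsto (fun i : Finset H × ℕ => 1 / ((i.2 : ℝ) + 1)) atTop (𝓝 0) := by
    rw [← prod_atTop_atTop_eq]
    exact tendsto_one_div_add_atTop_nhds_zero_nat.comp tendsto_snd
  refine squeeze_zero' (Eventually.of_forall fun i => l1_nonneg _) ?_ h
  filter_upwards [eventually_ge_atTop ({g}, 0)] with i hi
  exact (hv i g (hi.1 (Finset.mem_singleton_self g))).le

theorem ReiterCondition.exists_isInvariant [SMul H X] (h : ReiterCondition H X) :
    ∃ m : MeanOn X, m.IsInvariant H := by
  classical
  choose v hv hinv using fun i : Finset H × ℕ => h i.1 (1 / (i.2 + 1)) Nat.one_div_pos_of_nat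
  let U : Ultrafilter (Finset H × ℕ) := Ultrafilter.of atTop
  refine ⟨meanOfUltrafilter U hv, fun g f hf => ?_⟩
  obtain ⟨C, hC⟩ := hf
  have hsmall : Tendsto (fun i => C * l1 (mapDomain (g • ·) (v i) - v i)) U (𝓝 0) := by
    simpa using
      ((tendsto_l1_mapDomain_sub_atTop hinv g).mono_left (Ultrafilter.of_le _)).const_mul C
  have hdiff : Tendsto (fun i => pairing (v i) (fun x => f (g • x)) - pairing (v i) f) U (𝓝 0) :=
    squeeze_zero_norm (fun i => by
      rw [Real.norm_eq_abs, ← pairing_mapDomain_sub]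
      exact abs_pairing_le _ hC) hsmall
  have h := ((tendsto_meanOfUltrafilter U hv ⟨C, hC⟩).add hdiff).congr fun i => add_sub_cancel _ _
  rw [add_zero] at h
  exact h.limUnder_eq

theorem reiterCondition_of_injective [SMul H X] [SMul K Y] (φ : K → H) {ι : Y → X}
    (hι : Function.Injective ι) (hιφ : ∀ k y, ι (k • y) = φ k • ι y)
    (h : ∀ (F : Finset K) (ε : ℝ), 0 < ε → ∃ v : X →₀ ℝ, IsProb v ∧
      ↑v.support ⊆ Set.range ι ∧ ∀ k ∈ F, l1 (mapDomain (φ k • ·) v - v) < ε) :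
    ReiterCondition K Y := by
  intro F ε hε
  obtain ⟨v, hv, hsupp, hinv⟩ := h F ε hε
  have hw : mapDomain ι (comapDomain ι v hι.injOn) = v := mapDomain_comapDomain ι hι v hsupp
  refine ⟨comapDomain ι v hι.injOn, .of_mapDomain hι (by rwa [hw]), fun k hk => ?_⟩
  have hcomm : ι ∘ (k • ·) = (φ k • ·) ∘ ι := funext (hιφ k)
  rw [← l1_mapDomain hι, mapDomain_sub, ← mapDomain_comp, hcomm, mapDomain_comp, hw]
  exact hinv k hk

section Subgroup

variable {G : Type*} [Group G]

lemma countable_closure {s : Set G} (hs : s.Countable) : Countable (Subgroup.closure s) := by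
  have := hs.to_subtype
  have hrange : ((FreeGroup.lift ((↑) : s → G)).range : Set G).Countable := by
    rw [MonoidHom.coe_range]
    exact Set.countable_range _
  rw [FreeGroup.closure_eq_range]
  exact hrange.to_subtype

lemma countable_iSup {ι : Type*} [Countable ι] {c : ι → Subgroup G} (hc : ∀ i, Countable (c i)) :
    Countable ↥(⨆ i, c i) := by
  rw [Subgroup.iSup_eq_closure]
  exact countable_closure (Set.countable_iUnion fun i => Set.countable_coe_iff.1 (hc i))

/-- `Λ ⧸ (Γ ⊓ Λ)` embeds `Λ`-equivariantly into `G ⧸ Γ` as the cosets meeting `Λ`, so Reiter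
vectors supported there pull back. -/
theorem coAmenableIn_subgroupOf {Γ Λ : Subgroup G}
    (h : ∀ F : Finset G, ↑F ⊆ (Λ : Set G) → ∀ ε : ℝ, 0 < ε → ∃ v : G ⧸ Γ →₀ ℝ, IsProb v ∧
      ↑v.support ⊆ (QuotientGroup.mk '' (Λ : Set G) : Set (G ⧸ Γ)) ∧
      ∀ g ∈ F, l1 (mapDomain (g • ·) v - v) < ε) :
    CoAmenableIn (Γ.subgroupOf Λ) := by
  let ι : Λ ⧸ Γ.subgroupOf Λ → G ⧸ Γ := Quotient.map' Subtype.val fun a b hab => by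
    rw [QuotientGroup.leftRel_apply, Subgroup.mem_subgroupOf] at hab
    simpa [QuotientGroup.leftRel_apply] using hab
  have hι : Function.Injective ι := by
    intro q₁ q₂ hq
    obtain ⟨a, rfl⟩ := QuotientGroup.mk_surjective q₁
    obtain ⟨b, rfl⟩ := QuotientGroup.mk_surjective q₂
    rw [QuotientGroup.eq, Subgroup.mem_subgroupOf]
    exact QuotientGroup.eq.1 hq
  have hrange : Set.range ι = QuotientGroup.mk '' (Λ : Set G) := by
    ext q
    constructor
    · rintro ⟨⟨a⟩, rfl⟩
      exact ⟨a, a.2, rfl⟩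
    · rintro ⟨a, ha, rfl⟩
      exact ⟨QuotientGroup.mk ⟨a, ha⟩, rfl⟩
  refine ReiterCondition.exists_isInvariant (reiterCondition_of_injective Subtype.val hι
    (fun k q => Quotient.inductionOn' q fun _ => rfl) fun F ε hε => ?_)
  obtain ⟨v, hv, hsupp, hinv⟩ := h (F.map (Function.Embedding.subtype _))
    (by rw [Finset.coe_map]; rintro _ ⟨k, -, rfl⟩; exact k.2) ε hε
  exact ⟨v, hv, hrange ▸ hsupp, fun k hk => hinv k (Finset.mem_map_of_mem _ hk)⟩

variable {𝓗 : Set (Subgroup G)} {W : Finset G → Set G}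

lemma exists_mem_le_forall_subset (hcof : ∀ K : Subgroup G, Countable K → ∃ H ∈ 𝓗, K ≤ H)
    (hW : ∀ F, (W F).Countable) {K : Subgroup G} (hK : Countable K) :
    ∃ K' ∈ 𝓗, K ≤ K' ∧ ∀ F : Finset G, ↑F ⊆ (K : Set G) → W F ⊆ K' := by
  have hKc : (K : Set G).Countable := Set.countable_coe_iff.1 hK
  have hfin : {F : Finset G | ↑F ⊆ (K : Set G)}.Countable :=
    ((Set.countable_ofPred_finite_subset hKc).preimage Finset.coe_injective).mono
      fun F hF => by exact ⟨F.finite_toSet, hF⟩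
  let S := ⋃ F ∈ {F : Finset G | ↑F ⊆ (K : Set G)}, W F
  obtain ⟨K', hK', hle⟩ := hcof (Subgroup.closure ((K : Set G) ∪ S))
    (countable_closure (hKc.union (hfin.biUnion fun F _ => hW F)))
  exact ⟨K', hK', fun x hx => hle (Subgroup.subset_closure (Or.inl hx)),
    fun F hF x hx => hle (Subgroup.subset_closure (Or.inr (Set.mem_biUnion hF hx)))⟩

/-- A Löwenheim–Skolem closure: iterate `exists_mem_le_forall_subset` and take the increasing
union. -/
theorem exists_mem_le_forall_subset_of_iSup_mem (hcount : ∀ H ∈ 𝓗, Countable H)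
    (hcof : ∀ K : Subgroup G, Countable K → ∃ H ∈ 𝓗, K ≤ H)
    (hunion : ∀ c : ℕ → Subgroup G, (∀ n, c n ∈ 𝓗) → Monotone c → (⨆ n, c n) ∈ 𝓗)
    (hW : ∀ F, (W F).Countable) {K : Subgroup G} (hK : Countable K) :
    ∃ Λ ∈ 𝓗, K ≤ Λ ∧ ∀ F : Finset G, ↑F ⊆ (Λ : Set G) → W F ⊆ Λ := by
  obtain ⟨c₀, hc₀, hKc₀⟩ := hcof K hK
  choose! next hnext hle hWnext using fun K (hK : K ∈ 𝓗) =>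
    exists_mem_le_forall_subset hcof hW (hcount K hK)
  let c : ℕ → Subgroup G := fun n => next^[n] c₀
  have hsucc : ∀ n, c (n + 1) = next (c n) := fun n => Function.iterate_succ_apply' _ _ _
  have hc : ∀ n, c n ∈ 𝓗 := fun n => by
    induction n with
    | zero => exact hc₀
    | succ n ih => exact hsucc n ▸ hnext _ ih
  have hmono : Monotone c := monotone_nat_of_le_succ fun n => hsucc n ▸ hle _ (hc n)
  refine ⟨⨆ n, c n, hunion c hc hmono, hKc₀.trans (le_iSup c 0), fun F hF => ?_⟩
  have hmono' : Monotone fun n => (c n : Set G) := fun _ _ h => SetLike.coe_subset_coe.2 (hmono h)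
  rw [Subgroup.coe_iSup_of_directed hmono.directed_le] at hF ⊢
  obtain ⟨n, hn⟩ := hmono'.directed_le.exists_mem_subset_of_finset_subset_biUnion hF
  exact (hWnext _ (hc n) F hn).trans (hsucc n ▸ Set.subset_iUnion (fun n => (c n : Set G)) (n + 1))

theorem CoAmenableIn.exists_mem_le_coAmenableIn_subgroupOf {Γ : Subgroup G}
    (hco : CoAmenableIn Γ) (hcount : ∀ H ∈ 𝓗, Countable H)
    (hcof : ∀ K : Subgroup G, Countable K → ∃ H ∈ 𝓗, K ≤ H)
    (hunion : ∀ c : ℕ → Subgroup G, (∀ n, c n ∈ 𝓗) → Monotone c → (⨆ n, c n) ∈ 𝓗)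
    {Λ₁ : Subgroup G} (hΛ₁ : Countable Λ₁) :
    ∃ Λ ∈ 𝓗, Λ₁ ≤ Λ ∧ CoAmenableIn (Γ.subgroupOf Λ) := by
  obtain ⟨m, hm⟩ := hco
  choose v hv hinv using fun (F : Finset G) (n : ℕ) =>
    MeanOn.IsInvariant.reiterCondition hm F (1 / (n + 1)) Nat.one_div_pos_of_nat
  have hW : ∀ F, (⋃ n, Quotient.out '' ((v F n).support : Set (G ⧸ Γ))).Countable :=
    fun F => Set.countable_iUnion fun n => (v F n).support.countable_toSet.image _
  obtain ⟨Λ, hΛ, hle, hWΛ⟩ := exists_mem_le_forall_subset_of_iSup_mem hcount hcof hunion hW hΛ₁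
  refine ⟨Λ, hΛ, hle, coAmenableIn_subgroupOf fun F hF ε hε => ?_⟩
  obtain ⟨n, hn⟩ := exists_nat_one_div_lt hε
  refine ⟨v F n, hv F n, fun q hq => ?_, fun g hg => (hinv F n g hg).trans hn⟩
  exact ⟨q.out, hWΛ F hF (Set.mem_iUnion_of_mem n ⟨q, hq, rfl⟩), QuotientGroup.out_eq' q⟩

end Subgroup

end PP

open PP

theorem coamenable_in_countable_intermediate_general (G : Type) [Group G]
    (Γ : Subgroup G) (hco : CoAmenableIn Γ) :
    (∀ Λ₁ : Subgroup G, Countable Λ₁ → Γ ≤ Λ₁ →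
      ∃ Λ : Subgroup G, Countable Λ ∧ Λ₁ ≤ Λ ∧ CoAmenableIn (Γ.subgroupOf Λ)) ∧
    (∀ 𝓗 : Set (Subgroup G),
      (∀ H ∈ 𝓗, Countable H) →
      (∀ K : Subgroup G, Countable K → ∃ H ∈ 𝓗, K ≤ H) →
      (∀ c : ℕ → Subgroup G, (∀ n, c n ∈ 𝓗) → Monotone c → (⨆ n, c n) ∈ 𝓗) →
      ∀ Λ₁ : Subgroup G, Countable Λ₁ → Γ ≤ Λ₁ →
        ∃ Λ ∈ 𝓗, Λ₁ ≤ Λ ∧ CoAmenableIn (Γ.subgroupOf Λ)) := by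
  refine ⟨fun Λ₁ hΛ₁ _ => ?_, fun 𝓗 hcount hcof hunion Λ₁ hΛ₁ _ =>
    hco.exists_mem_le_coAmenableIn_subgroupOf hcount hcof hunion hΛ₁⟩
  obtain ⟨Λ, hΛ, hle⟩ := hco.exists_mem_le_coAmenableIn_subgroupOf (𝓗 := {K | Countable K})
    (fun _ h => h) (fun K hK => ⟨K, hK, le_rfl⟩) (fun c hc _ => countable_iSup hc) hΛ₁
  exact ⟨Λ, hΛ, hle⟩

/-- Let `Γ` be a countable subgroup of `G`, co-amenable in `G`.
Then every countable `Λ₁` with `Γ ≤ Λ₁ ≤ G` is contained in a countable `Λ ≤ G`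
in which `Γ` is co-amenable; moreover, given a cofinal family `𝓗` of countable
subgroups closed under countable increasing unions, `Λ` can be chosen in `𝓗`. -/
theorem coamenable_in_countable_intermediate (G : Type) [Group G]
    (Γ : Subgroup G) (hΓc : Countable Γ) (hco : CoAmenableIn Γ) :
    (∀ Λ₁ : Subgroup G, Countable Λ₁ → Γ ≤ Λ₁ →
      ∃ Λ : Subgroup G, Countable Λ ∧ Λ₁ ≤ Λ ∧ CoAmenableIn (Γ.subgroupOf Λ)) ∧
    (∀ 𝓗 : Set (Subgroup G),
      (∀ H ∈ 𝓗, Countable H) →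
      (∀ K : Subgroup G, Countable K → ∃ H ∈ 𝓗, K ≤ H) →
      (∀ c : ℕ → Subgroup G, (∀ n, c n ∈ 𝓗) → Monotone c → (⨆ n, c n) ∈ 𝓗) →
      ∀ Λ₁ : Subgroup G, Countable Λ₁ → Γ ≤ Λ₁ →
        ∃ Λ ∈ 𝓗, Λ₁ ≤ Λ ∧ CoAmenableIn (Γ.subgroupOf Λ)) :=
  coamenable_in_countable_intermediate_general G Γ hco
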